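/- arXiv:2106.02015 — 2 statements merged into one kernel-verified Lean document; each statement's English description precedes it below -/
import Mathlib

section
/- Let V ∈ L¹(ℝ³) be radially symmetric with |·|⁻² V ∈ L¹(ℝ³) and ∫_{ℝ³} V(x)/|x|² dx < 0. Define v_μ = ∫_{ℝ³} V(x) (sin(√μ |x|)/(√μ |x|))² dx. Then there exist constants c > 0 and μ₀ > 0 such that v_μ ≤ −c μ⁻¹ for all μ ≥ μ₀. -/
open MeasureTheory Filter Topology Set Metric Real
open scoped FourierTransform

/-!
Since `(sin (a r) / (a r))² a² = sin² (a r) / r²`, we have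
`μ v_μ = ∫ V(x) |x|⁻² sin² (√μ |x|) dx = ½ ∫ V |x|⁻² - ½ ∫ V(x) |x|⁻² cos (2 √μ |x|) dx`.
In polar coordinates the last integral is a cosine transform of `r ↦ r² · g(r) / r² = g(r)`,
which is integrable on `(0, ∞)` because `V |x|⁻²` is, so it tends to `0` by the
Riemann–Lebesgue lemma. Hence
`μ v_μ → ½ ∫ V |x|⁻² < 0`, and `μ v_μ ≤ ¼ ∫ V |x|⁻²` for all large `μ`.
-/

theorem Real.tendsto_integral_mul_cos_atTop {f : ℝ → ℝ} (hf : Integrable f) :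
    Tendsto (fun t : ℝ => ∫ v, f v * cos (t * v)) atTop (𝓝 0) := by
  have hscale : Tendsto (fun t : ℝ => t / (2 * π)) atTop (cocompact ℝ) :=
    (tendsto_id.atTop_div_const (by positivity)).mono_right atTop_le_cocompact
  have hRL := (Complex.continuous_re.tendsto 0).comp
    ((Real.tendsto_integral_exp_smul_cocompact fun v => (f v : ℂ)).comp hscale)
  rw [Complex.zero_re] at hRL
  refine hRL.congr fun t => ?_
  have hint : Integrable (fun v : ℝ => 𝐞 (-(v * (t / (2 * π)))) • (f v : ℂ)) := by
    simpa [mul_comm] using (Real.fourierIntegral_convergent_iff (t / (2 * π))).2 hf.ofReal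
  rw [Function.comp_apply, Function.comp_apply, ← RCLike.re_to_complex, ← integral_re hint]
  refine integral_congr_ae (.of_forall fun v => ?_)
  have hangle : 2 * π * -(v * (t / (2 * π))) = -(t * v) := by field_simp
  simp only [Circle.smul_def, Real.fourierChar_apply]
  rw [hangle, smul_eq_mul, RCLike.re_to_complex, Complex.re_mul_ofReal,
    Complex.exp_ofReal_mul_I_re, cos_neg, mul_comm]

theorem tendsto_integral_mul_sin_sq_atTop {α : Type*} [MeasurableSpace α] {ν : Measure α}
    {F φ : α → ℝ} (hF : Integrable F ν) (hφ : AEStronglyMeasurable φ ν)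
    (hcos : Tendsto (fun t : ℝ => ∫ x, F x * cos (t * φ x) ∂ν) atTop (𝓝 0)) :
    Tendsto (fun t : ℝ => ∫ x, F x * sin (t * φ x) ^ 2 ∂ν) atTop (𝓝 ((∫ x, F x ∂ν) / 2)) := by
  have hhalf : ∀ t : ℝ, ∫ x, F x * sin (t * φ x) ^ 2 ∂ν
      = (∫ x, F x ∂ν) / 2 - (∫ x, F x * cos (2 * t * φ x) ∂ν) / 2 := by
    intro t
    have hcos_int : Integrable (fun x => F x * cos (2 * t * φ x)) ν :=
      hF.mul_bdd (c := 1) (by fun_prop) (.of_forall fun x => by simpa using abs_cos_le_one _)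
    rw [← integral_div, ← integral_div, ← integral_sub (hF.div_const 2) (hcos_int.div_const 2)]
    refine integral_congr_ae (.of_forall fun x => ?_)
    simp only [sin_sq_eq_half_sub, show 2 * (t * φ x) = 2 * t * φ x by ring]
    ring
  have hdouble := hcos.comp (tendsto_id.const_mul_atTop two_pos)
  simpa only [hhalf, Function.comp_def, id, zero_div, sub_zero]
    using tendsto_const_nhds.sub (hdouble.div_const 2)

-- Both sides vanish when `a * r = 0`, by the conventions `x / 0 = 0` and `sin 0 = 0`.
theorem sinc_sq_mul_sq (a r : ℝ) :
    (sin (a * r) / (a * r)) ^ 2 * a ^ 2 = sin (a * r) ^ 2 / r ^ 2 := by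
  rcases eq_or_ne a 0 with rfl | ha
  · simp
  · rw [div_pow, mul_pow, div_mul_eq_mul_div, mul_comm (a ^ 2),
      mul_div_mul_right _ _ (pow_ne_zero 2 ha)]

section Radial

variable {E : Type*} [NormedAddCommGroup E] [NormedSpace ℝ E] [FiniteDimensional ℝ E]
  [Nontrivial E] [MeasurableSpace E] [BorelSpace E] (ν : Measure E) [ν.IsAddHaarMeasure]

theorem tendsto_integral_fun_norm_mul_cos_atTop {f : ℝ → ℝ}
    (hf : Integrable (fun x => f ‖x‖) ν) :
    Tendsto (fun t : ℝ => ∫ x, f ‖x‖ * cos (t * ‖x‖) ∂ν) atTop (𝓝 0) := by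
  set n := Module.finrank ℝ E
  set G := (Ioi (0 : ℝ)).indicator fun y => y ^ (n - 1) * f y
  have hG : Integrable G := by
    rw [integrable_fun_norm_addHaar] at hf
    exact (integrable_indicator_iff measurableSet_Ioi).2 hf
  have hpolar : ∀ t : ℝ, ∫ x, f ‖x‖ * cos (t * ‖x‖) ∂ν
      = n • ν.real (ball 0 1) • ∫ y, G y * cos (t * y) := by
    intro t
    have hG_mul : ∀ y, G y * cos (t * y)
        = (Ioi 0).indicator (fun y => y ^ (n - 1) * (f y * cos (t * y))) y := fun y => by
      by_cases hy : y ∈ Ioi 0 <;> simp [G, hy, mul_assoc]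
    simp only [integral_fun_norm_addHaar ν fun y => f y * cos (t * y), hG_mul,
      integral_indicator measurableSet_Ioi, smul_eq_mul, n]
  simpa only [hpolar, smul_zero] using
    ((Real.tendsto_integral_mul_cos_atTop hG).const_smul (ν.real (ball 0 1))).const_smul n

theorem tendsto_mul_integral_mul_sinc_sq_atTop {V : E → ℝ} {g : ℝ → ℝ}
    (hrad : ∀ x, V x = g ‖x‖) (hV : Integrable (fun x => V x / ‖x‖ ^ 2) ν) :
    Tendsto (fun μ : ℝ => μ * ∫ x, V x * (sin (√μ * ‖x‖) / (√μ * ‖x‖)) ^ 2 ∂ν) atTop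
      (𝓝 ((∫ x, V x / ‖x‖ ^ 2 ∂ν) / 2)) := by
  have hcos : Tendsto (fun t : ℝ => ∫ x, V x / ‖x‖ ^ 2 * cos (t * ‖x‖) ∂ν) atTop (𝓝 0) := by
    simp only [hrad] at hV ⊢
    exact tendsto_integral_fun_norm_mul_cos_atTop ν (f := fun r => g r / r ^ 2) hV
  have hsin := tendsto_integral_mul_sin_sq_atTop hV continuous_norm.aestronglyMeasurable hcos
  refine (hsin.comp tendsto_sqrt_atTop).congr' ?_
  filter_upwards [eventually_ge_atTop 0] with μ hμ
  rw [Function.comp_apply, ← integral_const_mul]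
  refine integral_congr_ae (.of_forall fun x => ?_)
  have hsinc := sinc_sq_mul_sq (√μ) ‖x‖
  rw [sq_sqrt hμ] at hsinc
  linear_combination (-V x) * hsinc

end Radial

theorem vmu_upper_bound_general
    (V : EuclideanSpace ℝ (Fin 3) → ℝ) (g : ℝ → ℝ)
    (hrad : ∀ x, V x = g ‖x‖)
    (hV2 : Integrable (fun x => V x / ‖x‖ ^ 2))
    (hneg : (∫ x, V x / ‖x‖ ^ 2) < 0) :
    ∃ c > (0 : ℝ), ∃ μ₀ > (0 : ℝ), ∀ μ ≥ μ₀,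
      (∫ x, V x * (Real.sin (Real.sqrt μ * ‖x‖) / (Real.sqrt μ * ‖x‖)) ^ 2)
        ≤ -c / μ := by
  set I := ∫ x, V x / ‖x‖ ^ 2
  have hlim := tendsto_mul_integral_mul_sinc_sq_atTop volume hrad hV2
  obtain ⟨μ₁, hμ₁⟩ := eventually_atTop.1 (hlim.eventually_lt_const (by linarith : I / 2 < I / 4))
  refine ⟨-(I / 4), by linarith, max μ₁ 1, by positivity, fun μ hμ => ?_⟩
  have hμpos : 0 < μ := one_pos.trans_le (le_of_max_le_right hμ)
  rw [neg_neg, le_div_iff₀ hμpos, mul_comm]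
  exact (hμ₁ μ (le_of_max_le_left hμ)).le

theorem vmu_upper_bound
    (V : EuclideanSpace ℝ (Fin 3) → ℝ) (g : ℝ → ℝ)
    (hrad : ∀ x, V x = g ‖x‖)
    (hV1 : Integrable V)
    (hV2 : Integrable (fun x => V x / ‖x‖ ^ 2))
    (hneg : (∫ x, V x / ‖x‖ ^ 2) < 0) :
    ∃ c > (0 : ℝ), ∃ μ₀ > (0 : ℝ), ∀ μ ≥ μ₀,
      (∫ x, V x * (Real.sin (Real.sqrt μ * ‖x‖) / (Real.sqrt μ * ‖x‖)) ^ 2)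
        ≤ -c / μ :=
  vmu_upper_bound_general V g hrad hV2 hneg
end

section
/- For α ∈ (1/3, 1/2) there exist c > 0 and μ₀ > 0 such that for all μ ≥ μ₀: ∫₀^{√μ/2} sin(x)²/(x² |log(x/√μ)|^{2α}) dx ≥ c / (log μ)^{2α}. -/
set_option maxHeartbeats 800000

open Real MeasureTheory intervalIntegral Set

theorem counterexample_lower_bound (α : ℝ)
    (hα : α ∈ Set.Ioo (1 / 3 : ℝ) (1 / 2)) :
    ∃ c > (0 : ℝ), ∃ μ₀ > (0 : ℝ), ∀ μ ≥ μ₀,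
      c / (Real.log μ) ^ (2 * α) ≤
        ∫ x in (0 : ℝ)..(Real.sqrt μ / 2),
          Real.sin x ^ 2 / (x ^ 2 * |Real.log (x / Real.sqrt μ)| ^ (2 * α)) := by
  obtain ⟨hα1, hα2⟩ := hα
  have hexp : (0:ℝ) < 2 * α := by linarith
  have hpi3 : (3:ℝ) < π := Real.pi_gt_three
  have hpi4 : π ≤ 4 := Real.pi_le_four
  have hsin1 : 0 < Real.sin 1 := Real.sin_pos_of_pos_of_lt_pi one_pos (by linarith)
  have hc : 0 < (π/2 - 1) * Real.sin 1 ^ 2 / 4 := by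
    have h1 := pow_pos hsin1 2
    have h : (0:ℝ) < π/2 - 1 := by linarith
    positivity
  refine ⟨(π/2 - 1) * Real.sin 1 ^ 2 / 4, hc, 100, by norm_num, ?_⟩
  intro μ hμ
  set s := Real.sqrt μ with hs
  have hμ0 : (0:ℝ) < μ := by linarith
  have hs10 : (10:ℝ) ≤ s := by
    rw [hs, show (10:ℝ) = Real.sqrt 100 by
      rw [show (100:ℝ) = 10^2 by norm_num, Real.sqrt_sq (by norm_num : (0:ℝ) ≤ 10)]]
    exact Real.sqrt_le_sqrt hμ
  have hs0 : (0:ℝ) < s := by linarith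
  have hlogμ : 0 < Real.log μ := Real.log_pos (by linarith)
  set L := Real.log μ ^ (2*α) with hL
  have hLpos : 0 < L := Real.rpow_pos_of_pos hlogμ _
  set f : ℝ → ℝ := fun x => Real.sin x ^ 2 / (x ^ 2 * |Real.log (x / s)| ^ (2 * α))
    with hf
  have hfnn : ∀ x, 0 ≤ f x := fun x => by
    apply div_nonneg (by positivity)
    positivity
  -- measurability
  have hmeas : Measurable f := by
    rw [hf]; measurability
  -- integrability via bound
  have hC : 0 < Real.log 2 ^ (2*α) := Real.rpow_pos_of_pos (Real.log_pos (by norm_num)) _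
  have hint : IntervalIntegrable f volume 0 (s/2) := by
    apply IntervalIntegrable.mono_fun' (g := fun _ => 1 / Real.log 2 ^ (2*α))
      intervalIntegrable_const hmeas.aestronglyMeasurable
    filter_upwards [ae_restrict_mem measurableSet_uIoc] with x hx
    rw [Set.uIoc_of_le (by linarith : (0:ℝ) ≤ s/2)] at hx
    obtain ⟨hx0, hxs⟩ := hx
    have hA : Real.log 2 ^ (2*α) ≤ |Real.log (x/s)| ^ (2*α) := by
      apply Real.rpow_le_rpow (Real.log_nonneg one_le_two) ?_ hexp.le
      have h1 : x/s ≤ 1/2 := by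
        rw [div_le_div_iff₀ hs0 two_pos]; linarith
      have h2 : Real.log (x/s) ≤ -Real.log 2 := by
        calc Real.log (x/s) ≤ Real.log (1/2) := Real.log_le_log (by positivity) h1
          _ = -Real.log 2 := by rw [one_div, Real.log_inv]
      exact le_abs.mpr (Or.inr (by linarith))
    have hsinx : Real.sin x ^ 2 ≤ x ^ 2 := Real.sin_sq_le_sq
    rw [Real.norm_eq_abs, abs_of_nonneg (hfnn x)]
    calc f x ≤ x^2 / (x^2 * Real.log 2 ^ (2*α)) := by
          exact div_le_div₀ (sq_nonneg x) hsinx (mul_pos (pow_pos hx0 2) hC)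
            (mul_le_mul_of_nonneg_left hA (sq_nonneg x))
      _ = 1 / Real.log 2 ^ (2*α) := by
          rw [div_mul_eq_div_div]
          congr 1
          exact div_self (pow_ne_zero 2 (ne_of_gt hx0))
  have h12 : (1:ℝ) ≤ π/2 := by linarith
  have hπs : π/2 ≤ s/2 := by linarith
  have hsub : ∀ a b : ℝ, 0 ≤ a → b ≤ s/2 → a ≤ b →
      IntervalIntegrable f volume a b := by
    intro a b ha hb hab
    apply hint.mono_set
    rw [Set.uIcc_of_le hab, Set.uIcc_of_le (by linarith : (0:ℝ) ≤ s/2)]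
    exact Set.Icc_subset_Icc ha hb
  have h01 : IntervalIntegrable f volume 0 1 := hsub 0 1 le_rfl (by linarith) zero_le_one
  have h1p : IntervalIntegrable f volume 1 (π/2) := hsub 1 (π/2) zero_le_one hπs h12
  have h0p : IntervalIntegrable f volume 0 (π/2) := hsub 0 (π/2) le_rfl hπs (by linarith)
  have hps : IntervalIntegrable f volume (π/2) (s/2) := hsub (π/2) (s/2) (by linarith) le_rfl hπs
  have hsplit : ∫ x in (0:ℝ)..(s/2), f x =
      (∫ x in (0:ℝ)..1, f x) + (∫ x in (1:ℝ)..(π/2), f x) + (∫ x in (π/2)..(s/2), f x) := by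
    rw [integral_add_adjacent_intervals h01 h1p, integral_add_adjacent_intervals h0p hps]
  have hnn1 : 0 ≤ ∫ x in (0:ℝ)..1, f x :=
    intervalIntegral.integral_nonneg zero_le_one (fun x _ => hfnn x)
  have hnn2 : 0 ≤ ∫ x in (π/2)..(s/2), f x :=
    intervalIntegral.integral_nonneg hπs (fun x _ => hfnn x)
  -- pointwise lower bound on [1, π/2]
  have hpt : ∀ x ∈ Set.Icc (1:ℝ) (π/2), Real.sin 1 ^ 2 / (4 * L) ≤ f x := by
    intro x hx
    obtain ⟨hx1, hx2⟩ := hx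
    have hsinx : Real.sin 1 ≤ Real.sin x :=
      Real.strictMonoOn_sin.monotoneOn ⟨by linarith, by linarith⟩
        ⟨by linarith, hx2⟩ hx1
    have hsq : Real.sin 1 ^ 2 ≤ Real.sin x ^ 2 := pow_le_pow_left₀ hsin1.le hsinx 2
    have hx4 : x^2 ≤ 4 := by nlinarith
    have hxs1 : x/s < 1 := by
      rw [div_lt_one hs0]; linarith
    have hlogneg : Real.log (x/s) < 0 := Real.log_neg (by positivity) hxs1
    have habs : |Real.log (x/s)| ≤ Real.log μ := by
      rw [abs_of_neg hlogneg, Real.log_div (by linarith : x ≠ 0) (ne_of_gt hs0)]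
      have hlogs : Real.log s = Real.log μ / 2 := by rw [hs, Real.log_sqrt hμ0.le]
      have hlogx : 0 ≤ Real.log x := Real.log_nonneg hx1
      linarith
    have hA : |Real.log (x/s)| ^ (2*α) ≤ L :=
      Real.rpow_le_rpow (abs_nonneg _) habs hexp.le
    have hApos : 0 < |Real.log (x/s)| ^ (2*α) :=
      Real.rpow_pos_of_pos (abs_pos.mpr hlogneg.ne) _
    have hDpos : 0 < x^2 * |Real.log (x/s)| ^ (2*α) := mul_pos (by nlinarith) hApos
    exact div_le_div₀ (sq_nonneg _) hsq hDpos
      (mul_le_mul hx4 hA hApos.le (by norm_num))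
  have hmid : (π/2 - 1) * Real.sin 1 ^ 2 / 4 / L ≤ ∫ x in (1:ℝ)..(π/2), f x := by
    have hconst : ∫ _x in (1:ℝ)..(π/2), (Real.sin 1 ^ 2 / (4 * L)) =
        (π/2 - 1) * (Real.sin 1 ^ 2 / (4 * L)) := by
      rw [intervalIntegral.integral_const, smul_eq_mul]
    calc (π/2 - 1) * Real.sin 1 ^ 2 / 4 / L
        = (π/2 - 1) * (Real.sin 1 ^ 2 / (4 * L)) := by
          rw [div_div, mul_div_assoc]
      _ = ∫ _x in (1:ℝ)..(π/2), (Real.sin 1 ^ 2 / (4 * L)) := hconst.symm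
      _ ≤ ∫ x in (1:ℝ)..(π/2), f x :=
          intervalIntegral.integral_mono_on h12 intervalIntegrable_const h1p hpt
  show (π/2 - 1) * Real.sin 1 ^ 2 / 4 / L ≤ ∫ x in (0:ℝ)..(s/2), f x
  rw [hsplit]
  linarith
end
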